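/- Embedding of λKB into λ•→: if Γ ⊢ e :ᵢ t is derivable in λKB, then itob(Γ) ⊢ clear(e) : •ⁱ t is derivable in λ•→, where itob replaces every context entry x :ⱼ s by x : •ʲs and clear erases the •-constructor and await-destructor from e (clear(•e') = e' and clear(await e') = e', applied recursively). -/
import Mathlib


namespace LambdaBullet

/-- Head constructors for pseudo-types. -/
inductive TyHead : Type
  | var (n : ℕ)
  | nat
  | prod
  | arrow
  | bullet

/-- Arity of each pseudo-type constructor. -/
def tyArity : TyHead → Type
  | .var _ => Empty
  | .nat => Empty
  | .prod => Bool
  | .arrow => Bool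
  | .bullet => Unit

/-- The polynomial functor whose M-type is the type of pseudo-types. -/
def TyP : PFunctor := ⟨TyHead, tyArity⟩

/-- Pseudo-types: possibly infinite coinductively generated trees. -/
abbrev PseudoType := TyP.M

/-- Type variable. -/
def tvar (n : ℕ) : PseudoType := PFunctor.M.mk ⟨TyHead.var n, Empty.elim⟩
/-- The type `Nat`. -/
def tnat : PseudoType := PFunctor.M.mk ⟨TyHead.nat, Empty.elim⟩
/-- Product type. -/
def tprod (t s : PseudoType) : PseudoType :=
  PFunctor.M.mk ⟨TyHead.prod, fun b => bif b then s else t⟩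
/-- Arrow type. -/
def tarrow (t s : PseudoType) : PseudoType :=
  PFunctor.M.mk ⟨TyHead.arrow, fun b => bif b then s else t⟩
/-- Delay type `•t`. -/
def tbullet (t : PseudoType) : PseudoType :=
  PFunctor.M.mk ⟨TyHead.bullet, fun _ => t⟩
/-- Iterated delay `•ⁿ t`. -/
def tbulletN (n : ℕ) (t : PseudoType) : PseudoType := tbullet^[n] t

/-- `Child t s` holds iff `s` is an immediate subtree of `t`. -/
def Child (t s : PseudoType) : Prop := ∃ b : TyP.B t.dest.1, t.dest.2 b = s

/-- `Subtree t s` holds iff `s` is a subtree of `t`. -/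
def Subtree (t s : PseudoType) : Prop := Relation.ReflTransGen Child t s

/-- A pseudo-type is regular if it has finitely many distinct subtrees. -/
def Regular (t : PseudoType) : Prop := {s | Subtree t s}.Finite

/-- The root of the tree is a `•`. -/
def headIsBullet (t : PseudoType) : Prop := t.dest.1 = TyHead.bullet

/-- A pseudo-type is guarded if every infinite path in its tree has
infinitely many `•`'s. -/
def Guarded (t : PseudoType) : Prop :=
  ∀ f : ℕ → PseudoType, f 0 = t → (∀ n, Child (f n) (f (n + 1))) →
    ∀ N, ∃ n, N ≤ n ∧ headIsBullet (f n)

/-- A type is a regular and guarded pseudo-type. -/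
def IsType (t : PseudoType) : Prop := Regular t ∧ Guarded t

/-- `•^∞`: the unique pseudo-type satisfying `•^∞ = • •^∞`. -/
def binf : PseudoType := PFunctor.M.corec (fun _ : Unit => ⟨TyHead.bullet, fun _ => ()⟩) ()

/-- Constants. -/
inductive Const : Type
  | pair
  | cfst
  | csnd
  | zero
  | succ
  | fix

/-- Expressions (with de Bruijn indices for variables). -/
inductive Expr : Type
  | var (x : ℕ)
  | const (k : Const)
  | lam (e : Expr)
  | app (e₁ e₂ : Expr)

def liftRen (f : ℕ → ℕ) : ℕ → ℕ
  | 0 => 0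
  | n + 1 => f n + 1

def rename (f : ℕ → ℕ) : Expr → Expr
  | .var n => .var (f n)
  | .const k => .const k
  | .lam e => .lam (rename (liftRen f) e)
  | .app a b => .app (rename f a) (rename f b)

def liftSub (ρ : ℕ → Expr) : ℕ → Expr
  | 0 => .var 0
  | n + 1 => rename Nat.succ (ρ n)

/-- Simultaneous (capture-avoiding) substitution. -/
def substE (ρ : ℕ → Expr) : Expr → Expr
  | .var n => ρ n
  | .const k => .const k
  | .lam e => .lam (substE (liftSub ρ) e)
  | .app a b => .app (substE ρ a) (substE ρ b)

/-- `subst0 e f` is `e[f/x]` for the topmost variable `x`. -/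
def subst0 (e f : Expr) : Expr :=
  substE (fun n => match n with | 0 => f | n + 1 => .var n) e

/-- The pair `⟨e₁, e₂⟩`. -/
def mkPair (e₁ e₂ : Expr) : Expr := .app (.app (.const .pair) e₁) e₂

/-- Evaluation contexts E ::= [] | E e | fst E | snd E | succ E. -/
inductive ECtx : Type
  | hole
  | app (E : ECtx) (e : Expr)
  | fst (E : ECtx)
  | snd (E : ECtx)
  | succ (E : ECtx)

/-- Plugging an expression into an evaluation context. -/
def ECtx.plug : ECtx → Expr → Expr
  | .hole, e => e
  | .app E f, e => .app (E.plug e) f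
  | .fst E, e => .app (.const .cfst) (E.plug e)
  | .snd E, e => .app (.const .csnd) (E.plug e)
  | .succ E, e => .app (.const .succ) (E.plug e)

/-- Head reduction rules. -/
inductive HeadRed : Expr → Expr → Prop
  | beta (e f) : HeadRed (.app (.lam e) f) (subst0 e f)
  | fst (e₁ e₂) : HeadRed (.app (.const .cfst) (mkPair e₁ e₂)) e₁
  | snd (e₁ e₂) : HeadRed (.app (.const .csnd) (mkPair e₁ e₂)) e₂

/-- Weak head (call-by-name) reduction: head rules closed under evaluation contexts. -/
def Red (a b : Expr) : Prop :=
  ∃ (E : ECtx) (e f : Expr), HeadRed e f ∧ a = E.plug e ∧ b = E.plug f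

/-- Many-step reduction. -/
def RedStar : Expr → Expr → Prop := Relation.ReflTransGen Red

/-- (Weak head) normal forms. -/
def NormalForm (e : Expr) : Prop := ∀ f, ¬ Red e f

/-- Typing contexts: finite maps from (de Bruijn) variables to types. -/
def Ctx : Type := ℕ → Option PseudoType

/-- Extending a typing context with a type for the topmost variable. -/
def Ctx.cons (t : PseudoType) (Γ : Ctx) : Ctx :=
  fun n => match n with | 0 => some t | n + 1 => Γ n

/-- The type assignment κ for constants. -/
inductive KappaTy : Const → PseudoType → Prop
  | pair {t s} : IsType t → IsType s →
      KappaTy .pair (tarrow t (tarrow s (tprod t s)))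
  | fst {t s} : IsType t → IsType s →
      KappaTy .cfst (tarrow (tprod t s) t)
  | snd {t s} : IsType t → IsType s →
      KappaTy .csnd (tarrow (tprod t s) s)
  | zero : KappaTy .zero tnat
  | succ : KappaTy .succ (tarrow tnat tnat)
  | fix {t} : IsType t → KappaTy .fix (tarrow (tarrow (tbullet t) t) t)

/-- The type assignment system λ•→. -/
inductive Types : Ctx → Expr → PseudoType → Prop
  | ax {Γ x t} : Γ x = some t → IsType t → Types Γ (.var x) t
  | const {Γ k t} : KappaTy k t → Types Γ (.const k) t
  | bulletI {Γ e t} : Types Γ e t → Types Γ e (tbullet t)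
  | arrowI {Γ e n t s} :
      Types (Ctx.cons (tbulletN n t) Γ) e (tbulletN n s) →
      Types Γ (.lam e) (tbulletN n (tarrow t s))
  | arrowE {Γ e₁ e₂ n t s} :
      Types Γ e₁ (tbulletN n (tarrow t s)) → Types Γ e₂ (tbulletN n t) →
      Types Γ (.app e₁ e₂) (tbulletN n s)


/-- Expressions of the calculus λKB of Krishnaswami and Benton: they extend
those of λ•→ with a delay constructor `•e` and a destructor `await e`. -/
inductive KBExpr : Type
  | var (x : ℕ)
  | const (k : Const)
  | lam (e : KBExpr)
  | app (e₁ e₂ : KBExpr)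
  | delay (e : KBExpr)
  | await (e : KBExpr)

/-- `clear` erases the `•`-constructor and `await`-destructor from a λKB
expression, recursively. -/
def clear : KBExpr → Expr
  | .var x => .var x
  | .const k => .const k
  | .lam e => .lam (clear e)
  | .app e₁ e₂ => .app (clear e₁) (clear e₂)
  | .delay e => clear e
  | .await e => clear e

/-- λKB typing contexts: they declare `x :ᵢ t`, i.e. a type together with a
time index. -/
def KBCtx : Type := ℕ → Option (ℕ × PseudoType)

def KBCtx.cons (i : ℕ) (t : PseudoType) (Γ : KBCtx) : KBCtx :=
  fun n => match n with | 0 => some (i, t) | n + 1 => Γ n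

/-- The typing judgement `Γ ⊢ e :ᵢ t` of λKB. -/
inductive KBTypes : KBCtx → KBExpr → ℕ → PseudoType → Prop
  | ax {Γ x i j t} : Γ x = some (i, t) → i ≤ j → IsType t →
      KBTypes Γ (.var x) j t
  | const {Γ k i t} : KappaTy k t → KBTypes Γ (.const k) i t
  | delayI {Γ e i t} : KBTypes Γ e (i + 1) t → KBTypes Γ (.delay e) i (tbullet t)
  | delayE {Γ e i t} : KBTypes Γ e i (tbullet t) → KBTypes Γ (.await e) (i + 1) t
  | arrowI {Γ e i t s} : KBTypes (KBCtx.cons i t Γ) e i s →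
      KBTypes Γ (.lam e) i (tarrow t s)
  | arrowE {Γ e₁ e₂ i t s} : KBTypes Γ e₁ i (tarrow t s) → KBTypes Γ e₂ i t →
      KBTypes Γ (.app e₁ e₂) i s

/-- `itob` replaces every context entry `x :ᵢ t` by `x : •ⁱt`. -/
def itob (Γ : KBCtx) : Ctx :=
  fun x => (Γ x).map (fun p => tbulletN p.1 p.2)

lemma child_tbullet {t s : PseudoType} : Child (tbullet t) s ↔ s = t := by
  simp only [Child, tbullet, PFunctor.M.dest_mk]
  constructor
  · rintro ⟨b, rfl⟩; rfl
  · rintro rfl; exact ⟨(), rfl⟩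

lemma headIsBullet_tbullet (t : PseudoType) : headIsBullet (tbullet t) := by
  rw [headIsBullet, tbullet,
    show (PFunctor.M.mk (F := TyP) ⟨TyHead.bullet, fun _ => t⟩).dest
      = ⟨TyHead.bullet, fun _ => t⟩ from PFunctor.M.dest_mk _]

lemma isType_tbullet {t : PseudoType} (ht : IsType t) : IsType (tbullet t) := by
  obtain ⟨hreg, hg⟩ := ht
  constructor
  · apply Set.Finite.subset (hreg.insert (tbullet t))
    intro s hs
    rcases (Relation.ReflTransGen.cases_head hs) with rfl | ⟨c, hc, hcs⟩
    · exact Set.mem_insert _ _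
    · rw [child_tbullet] at hc
      subst hc
      exact Set.mem_insert_of_mem _ hcs
  · intro f hf0 hstep N
    have hf1 : f 1 = t := by
      have := hstep 0
      rw [hf0, child_tbullet] at this
      exact this
    obtain ⟨n, hn, hb⟩ := hg (fun n => f (n + 1)) hf1 (fun n => hstep (n + 1)) N
    exact ⟨n + 1, le_trans hn (Nat.le_succ n), hb⟩

lemma isType_tbulletN {t : PseudoType} (ht : IsType t) (n : ℕ) :
    IsType (tbulletN n t) := by
  induction n with
  | zero => exact ht
  | succ n ih =>
    rw [tbulletN, Function.iterate_succ_apply']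
    exact isType_tbullet ih

lemma tbulletN_succ (n : ℕ) (t : PseudoType) :
    tbulletN (n + 1) t = tbullet (tbulletN n t) := by
  rw [tbulletN, Function.iterate_succ_apply']; rfl

lemma tbulletN_succ' (n : ℕ) (t : PseudoType) :
    tbulletN (n + 1) t = tbulletN n (tbullet t) := by
  rw [tbulletN, Function.iterate_succ_apply]; rfl

lemma types_bulletN_lift {Γ : Ctx} {e : Expr} {t : PseudoType} {i j : ℕ}
    (h : Types Γ e (tbulletN i t)) (hij : i ≤ j) : Types Γ e (tbulletN j t) := by
  induction j, hij using Nat.le_induction with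
  | base => exact h
  | succ j _ ih =>
    rw [tbulletN_succ]
    exact Types.bulletI ih

lemma itob_cons (i : ℕ) (t : PseudoType) (Γ : KBCtx) :
    itob (KBCtx.cons i t Γ) = Ctx.cons (tbulletN i t) (itob Γ) := by
  funext n
  cases n <;> rfl

/-- Embedding λKB into λ•→: if `Γ ⊢ e :ᵢ t` in λKB then
`itob(Γ) ⊢ clear(e) : •ⁱt` in λ•→. -/
theorem kb_embedding (Γ : KBCtx) (e : KBExpr) (i : ℕ) (t : PseudoType)
    (h : KBTypes Γ e i t) :
    Types (itob Γ) (clear e) (tbulletN i t) := by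
  induction h with
  | ax hx hij ht =>
    refine types_bulletN_lift (t := _) (Types.ax (t := tbulletN _ _) ?_ (isType_tbulletN ht _)) hij
    simp [itob, hx]
  | const hk =>
    exact types_bulletN_lift (i := 0) (Types.const hk) (Nat.zero_le _)
  | delayI _ ih =>
    rw [show tbulletN _ (tbullet _) = tbulletN (_ + 1) _ from (tbulletN_succ' _ _).symm]
    exact ih
  | delayE _ ih =>
    rw [tbulletN_succ']
    exact ih
  | arrowI _ ih =>
    rw [itob_cons] at ih
    exact Types.arrowI ih
  | arrowE _ _ ih₁ ih₂ =>
    exact Types.arrowE ih₁ ih₂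

end LambdaBullet
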